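/- arXiv:2211.05911 — 6 statements merged into one kernel-verified Lean document; each statement's English description precedes it below -/
import Mathlib

section
/- Let n ≥ 1 and let B be a linear subspace of 𝔽₂ⁿ. Define 𝓘 = {(S,T) ∈ 𝔽₂ⁿ × 𝔽₂ⁿ : S ∉ B and ⟨γ,T⟩ = 0 for all γ ∈ B + span{S}}. Suppose X ⊆ 𝓘 satisfies |X| ≥ 2ⁿ − |B| and ⟨S₁,T₂⟩ + ⟨S₂,T₁⟩ = 0 for all (S₁,T₁),(S₂,T₂) ∈ X. Then there exists a function f : 𝔽₂ⁿ \ B → B^⊤ such that ⟨S, f(T)⟩ = ⟨T, f(S)⟩ and ⟨S, f(S)⟩ = 0 for all S, T ∈ 𝔽₂ⁿ \ B, and X = {(S, f(S)) : S ∈ 𝔽₂ⁿ \ B}. -/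
open Module Set Submodule

/-!
Let `W = B + span {S : (S, T) ∈ X}`. The pairing condition makes any two `T`, `T'` over the same
`S` differ by an element of `W^⊤`, so `|X| ≤ |W \ B| · |W^⊤| = 2ⁿ - |B| · |W^⊤|`, using
`|W| · |W^⊤| = 2ⁿ`. The lower bound on `|X|` then forces `W^⊤ = 0`: every `S` carries at most one
`T`, and counting shows that every `S ∉ B` carries one.
-/

theorem Set.InjOn.exists_eq_setOf_snd_eq {α β : Type*} [Nonempty α] [Nonempty β]
    {X : Set (α × β)} {A : Set α} (hinj : InjOn Prod.fst X) (himage : Prod.fst '' X = A) :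
    ∃ f : α → β, X = {p | p.1 ∈ A ∧ p.2 = f p.1} := by
  refine ⟨fun a => (Function.invFunOn Prod.fst X a).2, ?_⟩
  subst himage
  ext p
  constructor
  · intro hp
    have hex : ∃ q ∈ X, q.1 = p.1 := ⟨p, hp, rfl⟩
    have hq := hinj (Function.invFunOn_mem hex) hp (Function.invFunOn_eq hex)
    exact ⟨mem_image_of_mem _ hp, congrArg Prod.snd hq.symm⟩
  · rintro ⟨hex, hp⟩
    obtain ⟨hmem, hfst⟩ := Function.invFunOn_pos hex
    convert hmem using 1
    exact Prod.ext hfst.symm hp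

theorem Set.ncard_le_ncard_mul_ncard_of_sub_mem {α V : Type*} [AddGroup V] [Finite α] [Finite V]
    {X : Set (α × V)} {A : Set α} (N : Set V) (hA : ∀ p ∈ X, p.1 ∈ A)
    (hN : ∀ S T T', (S, T) ∈ X → (S, T') ∈ X → T - T' ∈ N) :
    X.ncard ≤ A.ncard * N.ncard := by
  classical
  let g : α → V := fun S => if h : ∃ T, (S, T) ∈ X then h.choose else 0
  have hg : ∀ p ∈ X, (p.1, g p.1) ∈ X := fun p hp => by
    have h : ∃ T, (p.1, T) ∈ X := ⟨p.2, hp⟩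
    simpa only [g, dif_pos h] using h.choose_spec
  calc X.ncard ≤ (A ×ˢ N).ncard := by
        refine ncard_le_ncard_of_injOn (fun p => (p.1, p.2 - g p.1))
          (fun p hp => ⟨hA p hp, hN _ _ _ hp (hg p hp)⟩) ?_ (toFinite _)
        intro p _ q _ h
        simp only [Prod.mk.injEq] at h
        obtain ⟨h1, h2⟩ := h
        rw [h1, sub_left_inj] at h2
        exact Prod.ext h1 h2
    _ = A.ncard * N.ncard := ncard_prod

namespace LinearMap.BilinForm

section Orthogonal

variable {R M : Type*} [CommRing R] [AddCommGroup M] [Module R M] (β : LinearMap.BilinForm R M)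
  {B : Submodule R M} {X : Set (M × M)}

theorem sub_mem_orthogonal_sup_span_fst (horth : ∀ p ∈ X, ∀ v ∈ B, β v p.2 = 0)
    (hpair : ∀ p ∈ X, ∀ q ∈ X, β p.1 q.2 + β q.1 p.2 = 0) {S T T' : M}
    (hT : (S, T) ∈ X) (hT' : (S, T') ∈ X) :
    T - T' ∈ β.orthogonal (B ⊔ span R (Prod.fst '' X)) := by
  suffices B ⊔ span R (Prod.fst '' X) ≤ LinearMap.ker (β.flip (T - T')) from
    fun w hw => this hw
  refine sup_le (fun v hv => ?_) (span_le.2 ?_)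
  · simp [horth _ hT v hv, horth _ hT' v hv]
  · rintro _ ⟨q, hq, rfl⟩
    have h : β q.1 T = β q.1 T' := by
      rw [eq_neg_of_add_eq_zero_left (hpair q hq _ hT),
        eq_neg_of_add_eq_zero_left (hpair q hq _ hT')]
    simp [h]

end Orthogonal

section FiniteDimensional

variable {K V : Type*} [Field K] [AddCommGroup V] [Module K V] [FiniteDimensional K V]
  {β : LinearMap.BilinForm K V}

theorem natCard_mul_natCard_orthogonal (hβ : β.Nondegenerate) (W : Submodule K V) :
    Nat.card W * Nat.card (β.orthogonal W) = Nat.card V := by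
  rw [natCard_eq_pow_finrank (K := K) (V := W),
    natCard_eq_pow_finrank (K := K) (V := β.orthogonal W),
    natCard_eq_pow_finrank (K := K) (V := V), finrank_orthogonal hβ, ← pow_add,
    Nat.add_sub_cancel' (Submodule.finrank_le W)]

variable {B : Submodule K V} {X : Set (V × V)}

theorem orthogonal_sup_span_fst_eq_bot [Finite K] (hβ : β.Nondegenerate) (hfst : ∀ p ∈ X, p.1 ∉ B)
    (horth : ∀ p ∈ X, ∀ v ∈ B, β v p.2 = 0)
    (hpair : ∀ p ∈ X, ∀ q ∈ X, β p.1 q.2 + β q.1 p.2 = 0)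
    (hcard : Nat.card V - Nat.card B ≤ X.ncard) :
    β.orthogonal (B ⊔ span K (Prod.fst '' X)) = ⊥ := by
  have : Finite V := Module.finite_of_finite K
  set W := B ⊔ span K (Prod.fst '' X)
  set N := β.orthogonal W
  have hBW : (B : Set V) ⊆ W := SetLike.coe_subset_coe.2 le_sup_left
  have hX : X.ncard ≤ (Nat.card W - Nat.card B) * Nat.card N := by
    have h := ncard_le_ncard_mul_ncard_of_sub_mem (A := (W : Set V) \ B) (N : Set V)
      (fun p hp => ⟨mem_sup_right (subset_span (mem_image_of_mem _ hp)), hfst p hp⟩)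
      (fun _ _ _ => β.sub_mem_orthogonal_sup_span_fst horth hpair)
    rwa [ncard_sdiff hBW, ← Nat.card_coe_set_eq, ← Nat.card_coe_set_eq,
      ← Nat.card_coe_set_eq] at h
  have hWN : Nat.card W * Nat.card N = Nat.card V := natCard_mul_natCard_orthogonal hβ W
  have hBN : Nat.card B * Nat.card N ≤ Nat.card V :=
    hWN ▸ Nat.mul_le_mul_right _ (Nat.card_mono (toFinite _) hBW)
  have hN : Nat.card N ≤ 1 := by
    refine Nat.le_of_mul_le_mul_left (c := Nat.card B) ?_ (Nat.card_pos (α := B))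
    rw [Nat.sub_mul, hWN] at hX
    lia
  have := Finite.card_le_one_iff_subsingleton.1 hN
  exact eq_bot_of_subsingleton

theorem exists_eq_graph_of_card_le [Finite K] (hβ : β.Nondegenerate) (hfst : ∀ p ∈ X, p.1 ∉ B)
    (horth : ∀ p ∈ X, ∀ v ∈ B, β v p.2 = 0)
    (hpair : ∀ p ∈ X, ∀ q ∈ X, β p.1 q.2 + β q.1 p.2 = 0)
    (hcard : Nat.card V - Nat.card B ≤ X.ncard) :
    ∃ f : V → V, X = {p | p.1 ∉ B ∧ p.2 = f p.1} := by
  have : Finite V := Module.finite_of_finite K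
  have hinj : InjOn Prod.fst X := by
    rintro ⟨S, T⟩ hT ⟨_, T'⟩ hT' (rfl : S = _)
    have h := β.sub_mem_orthogonal_sup_span_fst horth hpair hT hT'
    rw [orthogonal_sup_span_fst_eq_bot hβ hfst horth hpair hcard, mem_bot, sub_eq_zero] at h
    rw [h]
  have himage : Prod.fst '' X = (B : Set V)ᶜ := by
    refine eq_of_subset_of_ncard_le (image_subset_iff.2 hfst) ?_ (toFinite _)
    rwa [hinj.ncard_image, ncard_compl, ← Nat.card_coe_set_eq]
  exact hinj.exists_eq_setOf_snd_eq himage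

end FiniteDimensional

end LinearMap.BilinForm

theorem nondegenerate_dotProductBilin {m R : Type*} [Fintype m] [CommSemiring R] :
    (dotProductBilin R R : LinearMap.BilinForm R (m → R)).Nondegenerate :=
  ⟨fun v hv => dotProduct_eq_zero v hv,
    fun w hw => dotProduct_eq_zero w fun v => dotProduct_comm w v ▸ hw v⟩

theorem stmt_0_general (n : ℕ) (B : Submodule (ZMod 2) (Fin n → ZMod 2))
    (X : Set ((Fin n → ZMod 2) × (Fin n → ZMod 2)))
    (hXI : X ⊆ {p | p.1 ∉ B ∧
      ∀ γ ∈ B ⊔ Submodule.span (ZMod 2) {p.1}, ∑ i, γ i * p.2 i = 0})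
    (hcard : 2 ^ n - Nat.card B ≤ X.ncard)
    (hpair : ∀ p ∈ X, ∀ q ∈ X, (∑ i, p.1 i * q.2 i) + (∑ i, q.1 i * p.2 i) = 0) :
    ∃ f : (Fin n → ZMod 2) → (Fin n → ZMod 2),
      (∀ S, S ∉ B → ∀ v ∈ B, ∑ i, f S i * v i = 0) ∧
      (∀ S T, S ∉ B → T ∉ B → (∑ i, S i * f T i) = ∑ i, T i * f S i) ∧
      (∀ S, S ∉ B → ∑ i, S i * f S i = 0) ∧
      X = {p | p.1 ∉ B ∧ p.2 = f p.1} := by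
  have hfst : ∀ p ∈ X, p.1 ∉ B := fun p hp => (hXI hp).1
  have horth : ∀ p ∈ X, ∀ v ∈ B, v ⬝ᵥ p.2 = 0 := fun p hp v hv =>
    (hXI hp).2 v (mem_sup_left hv)
  have hself : ∀ p ∈ X, p.1 ⬝ᵥ p.2 = 0 := fun p hp =>
    (hXI hp).2 p.1 (mem_sup_right (mem_span_singleton_self _))
  obtain ⟨f, rfl⟩ := LinearMap.BilinForm.exists_eq_graph_of_card_le nondegenerate_dotProductBilin
    hfst horth hpair (by simpa using hcard)
  refine ⟨f, fun S hS v hv => ?_, fun S T hS hT => ?_, fun S hS => hself (S, f S) ⟨hS, rfl⟩, rfl⟩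
  · exact (dotProduct_comm _ _).trans (horth (S, f S) ⟨hS, rfl⟩ v hv)
  · exact CharTwo.add_eq_zero.1 (hpair (S, f S) ⟨hS, rfl⟩ (T, f T) ⟨hT, rfl⟩)

/-- Lemma on `𝔽₂ⁿ`: if `X ⊆ 𝓘` has `|X| ≥ 2ⁿ - |B|` and
`⟨S₁,T₂⟩ + ⟨S₂,T₁⟩ = 0` for all pairs in `X`, then `X = {(S, f S) : S ∉ B}` for an
alternating function `f : 𝔽₂ⁿ \ B → B^⊤`. -/
theorem stmt_0 (n : ℕ) (hn : 1 ≤ n) (B : Submodule (ZMod 2) (Fin n → ZMod 2))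
    (X : Set ((Fin n → ZMod 2) × (Fin n → ZMod 2)))
    (hXI : X ⊆ {p | p.1 ∉ B ∧
      ∀ γ ∈ B ⊔ Submodule.span (ZMod 2) {p.1}, ∑ i, γ i * p.2 i = 0})
    (hcard : 2 ^ n - Nat.card B ≤ X.ncard)
    (hpair : ∀ p ∈ X, ∀ q ∈ X, (∑ i, p.1 i * q.2 i) + (∑ i, q.1 i * p.2 i) = 0) :
    ∃ f : (Fin n → ZMod 2) → (Fin n → ZMod 2),
      (∀ S, S ∉ B → ∀ v ∈ B, ∑ i, f S i * v i = 0) ∧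
      (∀ S T, S ∉ B → T ∉ B → (∑ i, S i * f T i) = ∑ i, T i * f S i) ∧
      (∀ S, S ∉ B → ∑ i, S i * f S i = 0) ∧
      X = {p | p.1 ∉ B ∧ p.2 = f p.1} :=
  stmt_0_general n B X hXI hcard hpair
end

section
/- Let ℓ be a prime, n ≥ 1, and let B be a linear subspace of 𝔽_ℓⁿ. Define 𝓘 = {(a,b) ∈ 𝔽_ℓⁿ × 𝔽_ℓⁿ : a ∉ B and ⟨γ,b⟩ = 0 for all γ ∈ B + span{a}}. Suppose X ⊆ 𝓘 satisfies |X| ≥ ℓⁿ − |B| and ⟨a₂, b₁⟩ = 0 for all (a₁,b₁),(a₂,b₂) ∈ X. Then X = {(a, 0) : a ∈ 𝔽_ℓⁿ \ B}. -/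
/-!
Let `V = B + span {a : (a, b) ∈ X}`. Every `(a, b) ∈ X` has `a ∈ V \ B` and `b ⊥ V`, so
`|X| ≤ (|V| - |B|) · |V⊥| = ℓⁿ - |B| · |V⊥|`, using `|V| · |V⊥| = ℓⁿ` for the nondegenerate dot
product. The lower bound `|X| ≥ ℓⁿ - |B|` then forces `V⊥ = 0`, i.e. `b = 0` for all
`(a, b) ∈ X`. Hence `X ⊆ {(a, 0) : a ∉ B}`, a set of exactly `ℓⁿ - |B|` elements.
-/

open Module Submodule

theorem Matrix.dotProductBilin_nondegenerate {R ι : Type*} [CommRing R] [Fintype ι] :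
    (dotProductBilin R R : LinearMap.BilinForm R (ι → R)).Nondegenerate := by
  classical
  have hrefl : (dotProductBilin R R : LinearMap.BilinForm R (ι → R)).IsRefl := fun x y h => by
    simpa [dotProduct_comm] using h
  refine hrefl.nondegenerate_iff_separatingLeft.mpr fun x hx => funext fun i => ?_
  simpa using hx (Pi.single i 1)

theorem ncard_setOf_fst_notMem_and_snd_eq_zero {α β : Type*} [Finite α] [Zero β] (S : Set α) :
    {p : α × β | p.1 ∉ S ∧ p.2 = 0}.ncard = Nat.card α - S.ncard := by
  have hprod : {p : α × β | p.1 ∉ S ∧ p.2 = 0} = Sᶜ ×ˢ {0} := by ext; simp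
  rw [hprod, Set.ncard_prod, Set.ncard_singleton, mul_one, Set.ncard_compl]

namespace LinearMap.BilinForm

theorem subset_sdiff_prod_orthogonal {K V : Type*} [CommRing K] [AddCommGroup V] [Module K V]
    {Φ : LinearMap.BilinForm K V} {B : Submodule K V} {X : Set (V × V)}
    (hXI : ∀ p ∈ X, p.1 ∉ B ∧ ∀ γ ∈ B ⊔ span K {p.1}, Φ γ p.2 = 0)
    (hpair : ∀ p ∈ X, ∀ q ∈ X, Φ q.1 p.2 = 0) :
    X ⊆ (((B ⊔ span K (Prod.fst '' X) : Submodule K V) : Set V) \ B) ×ˢ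
      Φ.orthogonal (B ⊔ span K (Prod.fst '' X)) := by
  intro p hp
  refine ⟨⟨mem_sup_right (subset_span ⟨p, hp, rfl⟩), (hXI p hp).1⟩, fun v hv => ?_⟩
  have hker : B ⊔ span K (Prod.fst '' X) ≤ LinearMap.ker (Φ.flip p.2) := by
    refine sup_le (fun γ hγ => (hXI p hp).2 γ (mem_sup_left hγ)) (span_le.mpr ?_)
    rintro _ ⟨q, hq, rfl⟩
    exact hpair p hp q hq
  exact hker hv

variable {K V : Type*} [Field K] [AddCommGroup V] [Module K V] [Finite V]
  {Φ : LinearMap.BilinForm K V}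

theorem card_mul_card_orthogonal (hΦ : Φ.Nondegenerate) (W : Submodule K V) :
    Nat.card W * Nat.card (Φ.orthogonal W) = Nat.card V := by
  rw [natCard_eq_pow_finrank (K := K) (V := W),
    natCard_eq_pow_finrank (K := K) (V := Φ.orthogonal W),
    natCard_eq_pow_finrank (K := K) (V := V), ← pow_add, finrank_orthogonal hΦ,
    Nat.add_sub_cancel' (Submodule.finrank_le W)]

theorem orthogonal_eq_bot_of_large_subset_sdiff_prod (hΦ : Φ.Nondegenerate)
    {B W : Submodule K V} (hBW : B ≤ W) {X : Set (V × V)}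
    (hX : X ⊆ ((W : Set V) \ B) ×ˢ Φ.orthogonal W) (hcard : Nat.card V - Nat.card B ≤ X.ncard) :
    Φ.orthogonal W = ⊥ := by
  have hXle : X.ncard ≤ (Nat.card W - Nat.card B) * Nat.card (Φ.orthogonal W) :=
    calc X.ncard ≤ (((W : Set V) \ B) ×ˢ (Φ.orthogonal W : Set V)).ncard := Set.ncard_le_ncard hX
      _ = _ := by
        rw [Set.ncard_prod, Set.ncard_sdiff (SetLike.coe_subset_coe.mpr hBW)]
        rfl
  rw [Nat.sub_mul, Φ.card_mul_card_orthogonal hΦ W] at hXle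
  have hBO_le : Nat.card B * Nat.card (Φ.orthogonal W) ≤ Nat.card V := by
    rw [← Φ.card_mul_card_orthogonal hΦ W]
    exact Nat.mul_le_mul_right _ (Nat.card_mono (Set.toFinite _) hBW)
  have hBV : Nat.card B ≤ Nat.card V := Finite.card_subtype_le (· ∈ B)
  have hle_one : Nat.card (Φ.orthogonal W) ≤ 1 := by
    have : Nat.card B * Nat.card (Φ.orthogonal W) ≤ Nat.card B * 1 := by omega
    exact Nat.le_of_mul_le_mul_left this Nat.card_pos
  have := Finite.card_le_one_iff_subsingleton.mp hle_one
  exact eq_bot_of_subsingleton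

end LinearMap.BilinForm

theorem stmt_1_general (ℓ : ℕ) (hℓ : ℓ.Prime) (n : ℕ)
    (B : Submodule (ZMod ℓ) (Fin n → ZMod ℓ))
    (X : Set ((Fin n → ZMod ℓ) × (Fin n → ZMod ℓ)))
    (hXI : X ⊆ {p | p.1 ∉ B ∧
      ∀ γ ∈ B ⊔ Submodule.span (ZMod ℓ) {p.1}, ∑ i, γ i * p.2 i = 0})
    (hcard : ℓ ^ n - Nat.card B ≤ X.ncard)
    (hpair : ∀ p ∈ X, ∀ q ∈ X, ∑ i, q.1 i * p.2 i = 0) :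
    X = {p | p.1 ∉ B ∧ p.2 = 0} := by
  have := Fact.mk hℓ
  have : NeZero ℓ := ⟨hℓ.ne_zero⟩
  have hcardV : Nat.card (Fin n → ZMod ℓ) = ℓ ^ n := by simp
  have hX := LinearMap.BilinForm.subset_sdiff_prod_orthogonal
    (Φ := dotProductBilin (ZMod ℓ) (ZMod ℓ)) (fun p hp => hXI hp) hpair
  have horth := LinearMap.BilinForm.orthogonal_eq_bot_of_large_subset_sdiff_prod
    Matrix.dotProductBilin_nondegenerate le_sup_left hX (hcardV ▸ hcard)
  have hX0 : X ⊆ {p | p.1 ∉ B ∧ p.2 = 0} := fun p hp =>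
    ⟨(hXI hp).1, by simpa [horth] using (hX hp).2⟩
  refine Set.eq_of_subset_of_ncard_le hX0 (le_of_eq_of_le ?_ hcard) (Set.toFinite _)
  rw [← hcardV]
  exact ncard_setOf_fst_notMem_and_snd_eq_zero (B : Set (Fin n → ZMod ℓ))

/-- Lemma on `𝔽_ℓⁿ`: if `X ⊆ 𝓘` has `|X| ≥ ℓⁿ - |B|` and
`⟨a₂,b₁⟩ = 0` for all `(a₁,b₁),(a₂,b₂) ∈ X`, then `X = {(a, 0) : a ∉ B}`. -/
theorem stmt_1 (ℓ : ℕ) (hℓ : ℓ.Prime) (n : ℕ) (hn : 1 ≤ n)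
    (B : Submodule (ZMod ℓ) (Fin n → ZMod ℓ))
    (X : Set ((Fin n → ZMod ℓ) × (Fin n → ZMod ℓ)))
    (hXI : X ⊆ {p | p.1 ∉ B ∧
      ∀ γ ∈ B ⊔ Submodule.span (ZMod ℓ) {p.1}, ∑ i, γ i * p.2 i = 0})
    (hcard : ℓ ^ n - Nat.card B ≤ X.ncard)
    (hpair : ∀ p ∈ X, ∀ q ∈ X, ∑ i, q.1 i * p.2 i = 0) :
    X = {p | p.1 ∉ B ∧ p.2 = 0} :=
  stmt_1_general ℓ hℓ n B X hXI hcard hpair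
end

section
/- Let A be a finite abelian group and p a prime. Suppose a ∈ A satisfies p·a = 0 and a ∉ pA, and let b ∈ A. Then every alternating ℤ-bilinear map λ : A × A → ℚ/ℤ satisfies λ(a, b) = 0 if and only if b ∈ pA + ⟨a⟩, where ⟨a⟩ denotes the subgroup generated by a. (Equivalently, the natural restriction map Hom(∧²(A), ℚ/ℤ) → Hom(∧²(⟨a,b⟩), ℚ/ℤ) is the zero map if and only if b ∈ pA + ⟨a⟩.) -/
/-!
Both sides only see the images `ā, b̄` of `a, b` in the `𝔽_p`-vector space `A ⧸ pA`.
If `b = p • x + k • a`, biadditivity gives `λ(a, b) = λ(p • a, x) + k • λ(a, a) = 0`.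
Otherwise `ā` and `b̄` are linearly independent, so there are functionals `f, g` on `A ⧸ pA` with
`f ā * g b̄ - f b̄ * g ā ≠ 0`, and a character `c : 𝔽_p → ℚ/ℤ` not killing this value;
`λ(x, y) = c (f x̄ * g ȳ - f ȳ * g x̄)` is then alternating, biadditive and nonzero at `(a, b)`.
-/

open Submodule

namespace ModN

variable {G : Type*} [AddCommGroup G] {n : ℕ}

theorem mkQ_eq_zero_iff {x : G} : mkQ n x = 0 ↔ ∃ y : G, n • y = x := by
  simp [mkQ, Submodule.Quotient.mk_eq_zero]

theorem mkQ_mem_span_singleton_iff [NeZero n] {a b : G} :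
    mkQ n b ∈ ZMod n ∙ mkQ n a ↔ ∃ x : G, ∃ k : ℤ, b = n • x + k • a := by
  rw [mem_span_singleton]
  constructor
  · rintro ⟨c, hc⟩
    have : mkQ n (b - c.val • a) = 0 := by
      rw [map_sub, map_nsmul, ← Nat.cast_smul_eq_nsmul (ZMod n), ZMod.natCast_zmod_val, hc,
        sub_self]
    obtain ⟨y, hy⟩ := mkQ_eq_zero_iff.mp this
    exact ⟨y, c.val, by rw [hy, natCast_zsmul, sub_add_cancel]⟩
  · rintro ⟨x, k, rfl⟩
    refine ⟨k, ?_⟩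
    rw [Int.cast_smul_eq_zsmul, map_add, mkQ_eq_zero_iff.mpr ⟨x, rfl⟩, zero_add, map_zsmul]

end ModN

section Wedge

variable {A R M : Type*} [AddCommGroup A] [CommRing R] [AddCommGroup M]

def wedgeForm (c : R →+ M) (f g : A →+ R) (x y : A) : M :=
  c (f x * g y - f y * g x)

variable (c : R →+ M) (f g : A →+ R)

theorem wedgeForm_add_left (x y z : A) :
    wedgeForm c f g (x + y) z = wedgeForm c f g x z + wedgeForm c f g y z := by
  rw [wedgeForm, wedgeForm, wedgeForm, ← map_add c, map_add f, map_add g]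
  congr 1
  ring

theorem wedgeForm_add_right (x y z : A) :
    wedgeForm c f g x (y + z) = wedgeForm c f g x y + wedgeForm c f g x z := by
  rw [wedgeForm, wedgeForm, wedgeForm, ← map_add c, map_add f, map_add g]
  congr 1
  ring

theorem wedgeForm_self (x : A) : wedgeForm c f g x x = 0 := by
  simp [wedgeForm]

end Wedge

theorem exists_dual_mul_sub_mul_ne_zero {K V : Type*} [Field K] [AddCommGroup V] [Module K V]
    {u v : V} (hu : u ≠ 0) (hv : v ∉ K ∙ u) :
    ∃ f g : Module.Dual K V, f u * g v - f v * g u ≠ 0 := by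
  obtain ⟨f, hfu⟩ := Module.Projective.exists_dual_ne_zero K hu
  obtain ⟨g, hgv, hg⟩ := exists_dual_map_eq_bot_of_notMem hv inferInstance
  have hgu : g u = 0 := by
    simpa [map_span, Set.image_singleton] using hg
  exact ⟨f, g, by simpa [hgu] using ⟨hfu, hgv⟩⟩

theorem biadditive_apply_nsmul_add_zsmul_eq_zero {A M : Type*} [AddCommGroup A] [AddCommGroup M]
    (lam : A → A → M) (hadd_left : ∀ x y z, lam (x + y) z = lam x z + lam y z)
    (hadd_right : ∀ x y z, lam x (y + z) = lam x y + lam x z) (hself : ∀ x, lam x x = 0)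
    {n : ℕ} {a : A} (ha : n • a = 0) (x : A) (k : ℤ) : lam a (n • x + k • a) = 0 := by
  let lamLeft : A →+ M := AddMonoidHom.mk' (lam · x) (hadd_left · · x)
  let lamRight : A →+ M := AddMonoidHom.mk' (lam a) (hadd_right a)
  calc lam a (n • x + k • a) = lamRight (n • x) + lamRight (k • a) := hadd_right a _ _
    _ = lamLeft (n • a) + k • lam a a := by rw [map_nsmul, map_zsmul, map_nsmul]; rfl
    _ = 0 := by rw [ha, map_zero, hself, smul_zero, add_zero]

theorem exists_alternating_apply_ne_zero {A : Type*} [AddCommGroup A] {p : ℕ} (hp : p.Prime)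
    {a b : A} (ha : ¬ ∃ x : A, a = p • x) (hb : ¬ ∃ x : A, ∃ k : ℤ, b = p • x + k • a) :
    ∃ lam : A → A → AddCircle (1 : ℚ), (∀ x y z, lam (x + y) z = lam x z + lam y z) ∧
      (∀ x y z, lam x (y + z) = lam x y + lam x z) ∧ (∀ x, lam x x = 0) ∧ lam a b ≠ 0 := by
  have := Fact.mk hp
  have hu : ModN.mkQ p a ≠ 0 := fun h ↦ ha <| (ModN.mkQ_eq_zero_iff.mp h).imp fun _ ↦ Eq.symm
  have hv : ModN.mkQ p b ∉ ZMod p ∙ ModN.mkQ p a := (hb <| ModN.mkQ_mem_span_singleton_iff.mp ·)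
  obtain ⟨f, g, hfg⟩ := exists_dual_mul_sub_mul_ne_zero hu hv
  obtain ⟨c, hc⟩ := CharacterModule.exists_character_apply_ne_zero_of_ne_zero hfg
  let f' := f.toAddMonoidHom.comp (ModN.mkQ p)
  let g' := g.toAddMonoidHom.comp (ModN.mkQ p)
  exact ⟨wedgeForm c f' g', wedgeForm_add_left c f' g', wedgeForm_add_right c f' g',
    wedgeForm_self c f' g', hc⟩

theorem stmt_3_general {A : Type*} [AddCommGroup A] (p : ℕ) (hp : p.Prime)
    (a b : A) (ha : p • a = 0) (haP : ¬ ∃ x : A, a = p • x) :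
    (∀ lam : A → A → AddCircle (1 : ℚ),
        (∀ x y z : A, lam (x + y) z = lam x z + lam y z) →
        (∀ x y z : A, lam x (y + z) = lam x y + lam x z) →
        (∀ x : A, lam x x = 0) →
        lam a b = 0)
      ↔ ∃ x : A, ∃ k : ℤ, b = p • x + k • a := by
  refine ⟨fun H ↦ ?_, fun ⟨x, k, hb⟩ lam h₁ h₂ h₃ ↦ ?_⟩
  · by_contra hb
    obtain ⟨lam, h₁, h₂, h₃, hne⟩ := exists_alternating_apply_ne_zero hp haP hb
    exact hne (H lam h₁ h₂ h₃)
  · exact hb ▸ biadditive_apply_nsmul_add_zsmul_eq_zero lam h₁ h₂ h₃ ha x k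

/-- for `a ∈ A[p] \ pA` and `b ∈ A`, every alternating ℤ-bilinear map
`λ : A × A → ℚ/ℤ` vanishes at `(a,b)` if and only if `b ∈ pA + ⟨a⟩`. -/
theorem stmt_3 {A : Type*} [AddCommGroup A] [Fintype A] (p : ℕ) (hp : p.Prime)
    (a b : A) (ha : p • a = 0) (haP : ¬ ∃ x : A, a = p • x) :
    (∀ lam : A → A → AddCircle (1 : ℚ),
        (∀ x y z : A, lam (x + y) z = lam x z + lam y z) →
        (∀ x y z : A, lam x (y + z) = lam x y + lam x z) →
        (∀ x : A, lam x x = 0) →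
        lam a b = 0)
      ↔ ∃ x : A, ∃ k : ℤ, b = p • x + k • a :=
  stmt_3_general p hp a b ha haP
end

section
/- Let A be a finite abelian group and p a prime. Suppose a ∈ A satisfies p·a = 0 and a ∉ pA, and suppose b ∈ A satisfies b ∉ pA + ⟨a⟩. Then the order of b is divisible by p, the subgroups ⟨a⟩ and ⟨b⟩ intersect trivially (⟨a⟩ ∩ ⟨b⟩ = {0}), the subgroup Γ = ⟨a, b⟩ is isomorphic to ⟨a⟩ ⊕ ⟨b⟩, and the quotient Γ/pΓ has order p² (equivalently, Γ ⊗_ℤ 𝔽_p has dimension 2 over 𝔽_p). -/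
/-!
If `p ∤ c`, a Bézout relation `u p + v c = 1` writes any `y` as `p • (u • y) + v • (c • y)`.
So `a = c • b` would force `b ∈ pA + ⟨a⟩` (or `a ∈ pA` when `p ∣ c`); hence `a ∉ ⟨b⟩`, and since
`⟨a⟩` has prime order `p`, `⟨a⟩ ∩ ⟨b⟩ = 0` and `Γ = ⟨a⟩ ⊕ ⟨b⟩` has order `p · ord b`. Likewise
`p ∣ ord b`, as otherwise `b ∈ pA`. Multiplication by `p` kills `a`, so `pΓ = ⟨p • b⟩` has order
`ord b / p`, and `|Γ / pΓ| = p²`.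
-/

open AddSubgroup

theorem AddSubgroup.inf_eq_bot_or_le_of_prime_card {G : Type*} [AddGroup G] {H : AddSubgroup G}
    (K : AddSubgroup G) (hH : (Nat.card H).Prime) : H ⊓ K = ⊥ ∨ H ≤ K := by
  have : Finite H := Nat.finite_of_card_ne_zero hH.ne_zero
  rcases (Nat.dvd_prime hH).1 (card_dvd_of_le (inf_le_left : H ⊓ K ≤ H)) with h1 | hp
  · exact Or.inl (card_eq_one.1 h1)
  · exact Or.inr (inf_eq_left.1 (eq_of_le_of_card_ge inf_le_left hp.ge))

section

variable {G : Type*} [AddCommGroup G]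

theorem exists_eq_nsmul_add_zsmul_of_isCoprime {n : ℕ} {c : ℤ} (hc : IsCoprime (n : ℤ) c)
    {x y : G} (h : c • y = x) : ∃ z : G, ∃ k : ℤ, y = n • z + k • x := by
  obtain ⟨u, v, huv⟩ := hc
  refine ⟨u • y, v, ?_⟩
  calc y = (u * n + v * c) • y := by rw [huv, one_zsmul]
    _ = n • (u • y) + v • x := by rw [add_smul, mul_comm u, mul_smul, natCast_zsmul, mul_smul, h]

theorem dvd_addOrderOf_of_not_exists_eq_nsmul {p : ℕ} (hp : p.Prime) {b : G}
    (hb : ¬ ∃ x : G, b = p • x) : p ∣ addOrderOf b := by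
  by_contra hpb
  obtain ⟨m, hm⟩ := exists_nsmul_eq_self_of_coprime (hp.coprime_iff_not_dvd.2 hpb)
  exact hb ⟨m • b, by rw [smul_comm, hm]⟩

theorem notMem_zmultiples_of_not_exists_eq {p : ℕ} (hp : p.Prime) {a b : G}
    (haP : ¬ ∃ x : G, a = p • x) (hb : ¬ ∃ x : G, ∃ k : ℤ, b = p • x + k • a) :
    a ∉ zmultiples b := by
  rintro ⟨c, rfl⟩
  by_cases hpc : (p : ℤ) ∣ c
  · obtain ⟨d, rfl⟩ := hpc
    exact haP ⟨d • b, by simp only [mul_smul, natCast_zsmul]⟩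
  · exact hb (exists_eq_nsmul_add_zsmul_of_isCoprime
      ((Nat.prime_iff_prime_int.1 hp).coprime_iff_not_dvd.2 hpc) rfl)

theorem AddSubgroup.closure_pair (a b : G) :
    closure ({a, b} : Set G) = zmultiples a ⊔ zmultiples b := by
  rw [Set.insert_eq, closure_union, zmultiples_eq_closure, zmultiples_eq_closure]

theorem AddSubgroup.nonempty_sup_addEquiv_prod {H K : AddSubgroup G} (h : H ⊓ K = ⊥) :
    Nonempty (↥(H ⊔ K) ≃+ H × K) := by
  let f : H × K →+ G := H.subtype.coprod K.subtype
  have hrange : f.range = H ⊔ K := by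
    ext x
    simp [mem_sup, f]
  have hinj : Function.Injective f := by
    rw [injective_iff_map_eq_zero]
    rintro ⟨y, z⟩ (hyz : (y : G) + z = 0)
    have hy : (y : G) ∈ H ⊓ K := ⟨y.2, eq_neg_of_add_eq_zero_left hyz ▸ K.neg_mem z.2⟩
    rw [h, mem_bot] at hy
    rw [hy, zero_add] at hyz
    ext <;> assumption
  exact ⟨(AddEquiv.addSubgroupCongr hrange.symm).trans (AddMonoidHom.ofInjective hinj).symm⟩

theorem AddSubgroup.card_quotient_map_nsmul_top_mul (Γ : AddSubgroup G) (n : ℕ) :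
    Nat.card (Γ ⧸ map (DistribSMul.toAddMonoidHom Γ n) ⊤) *
      Nat.card (Γ.map (DistribSMul.toAddMonoidHom G n)) = Nat.card Γ := by
  have hcomm : (DistribSMul.toAddMonoidHom G n).comp Γ.subtype =
      Γ.subtype.comp (DistribSMul.toAddMonoidHom Γ n) := rfl
  have hmap : Γ.map (DistribSMul.toAddMonoidHom G n) =
      (map (DistribSMul.toAddMonoidHom Γ n) ⊤).map Γ.subtype := by
    rw [map_map, ← hcomm, ← map_map, ← AddMonoidHom.range_eq_map, range_subtype]
  rw [hmap, ← Nat.card_congr (equivMapOfInjective _ _ (subtype_injective Γ)).toEquiv,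
    ← card_eq_card_quotient_mul_card_addSubgroup]

theorem AddSubgroup.map_nsmul_zmultiples_sup {n : ℕ} {a : G} (ha : n • a = 0) (b : G) :
    (zmultiples a ⊔ zmultiples b).map (DistribSMul.toAddMonoidHom G n) =
      zmultiples (n • b) := by
  rw [map_sup, AddMonoidHom.map_zmultiples, AddMonoidHom.map_zmultiples]
  change zmultiples (n • a) ⊔ zmultiples (n • b) = _
  rw [ha, zmultiples_zero_eq_bot, bot_sup_eq]

end

/-- for `a ∈ A[p] \ pA` and `b ∉ pA + ⟨a⟩`: `p ∣ ord(b)`,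
`⟨a⟩ ∩ ⟨b⟩ = 0`, `Γ = ⟨a,b⟩ ≅ ⟨a⟩ ⊕ ⟨b⟩`, and `|Γ/pΓ| = p²`. -/
theorem stmt_5 {A : Type*} [AddCommGroup A] [Fintype A] (p : ℕ) (hp : p.Prime)
    (a b : A) (ha : p • a = 0) (haP : ¬ ∃ x : A, a = p • x)
    (hb : ¬ ∃ x : A, ∃ k : ℤ, b = p • x + k • a) :
    p ∣ addOrderOf b ∧
    AddSubgroup.zmultiples a ⊓ AddSubgroup.zmultiples b = ⊥ ∧
    Nonempty ((AddSubgroup.closure ({a, b} : Set A)) ≃+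
      (AddSubgroup.zmultiples a × AddSubgroup.zmultiples b)) ∧
    Nat.card ((AddSubgroup.closure ({a, b} : Set A)) ⧸
      (AddSubgroup.map
        (DistribMulAction.toAddMonoidHom (AddSubgroup.closure ({a, b} : Set A)) p)
        (⊤ : AddSubgroup (AddSubgroup.closure ({a, b} : Set A)))))
      = p ^ 2 := by
  have := Fact.mk hp
  have hpb : p ∣ addOrderOf b := dvd_addOrderOf_of_not_exists_eq_nsmul hp
    fun ⟨x, hx⟩ => hb ⟨x, 0, by rw [hx, zero_smul, add_zero]⟩
  have hcard_a : Nat.card (zmultiples a) = p := by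
    rw [Nat.card_zmultiples, addOrderOf_eq_prime ha fun h => haP ⟨0, by rw [h, smul_zero]⟩]
  have hdisj : zmultiples a ⊓ zmultiples b = ⊥ :=
    (inf_eq_bot_or_le_of_prime_card _ (hcard_a ▸ hp)).resolve_right fun h =>
      notMem_zmultiples_of_not_exists_eq hp haP hb (h (mem_zmultiples a))
  obtain ⟨e⟩ := nonempty_sup_addEquiv_prod hdisj
  rw [← closure_pair] at e
  refine ⟨hpb, hdisj, ⟨e⟩, ?_⟩
  have hcard_Γ : Nat.card (closure {a, b} : AddSubgroup A) = p * addOrderOf b := by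
    rw [Nat.card_congr e.toEquiv, Nat.card_prod, hcard_a, Nat.card_zmultiples]
  have hcard_pΓ : Nat.card ((closure {a, b} : AddSubgroup A).map
      (DistribSMul.toAddMonoidHom A p)) = addOrderOf b / p := by
    rw [closure_pair, map_nsmul_zmultiples_sup ha, Nat.card_zmultiples,
      addOrderOf_nsmul_of_dvd hp.ne_zero hpb]
  have hcard_split := card_quotient_map_nsmul_top_mul (closure {a, b}) p
  obtain ⟨m, hm⟩ := hpb
  have hm0 : 0 < m := Nat.pos_of_mul_pos_left (hm ▸ addOrderOf_pos b)
  rw [hcard_Γ, hcard_pΓ, hm, Nat.mul_div_cancel_left _ hp.pos] at hcard_split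
  exact Nat.eq_of_mul_eq_mul_right hm0 (hcard_split.trans (by ring))
end

section
/- Let A be a finite abelian group and ℓ a prime. Let B = A[ℓ] ∩ ℓA, where A[ℓ] = {x ∈ A : ℓ·x = 0} and ℓA = {ℓ·x : x ∈ A}. Then for any a, a' ∈ A[ℓ] \ B there exists a group automorphism ψ of A with ψ(a) = a'. -/
/-!
Since `a, a' ∉ ℓA`, their images in the `𝔽_ℓ`-vector space `A/ℓA` are nonzero, so some
`f : A →+ ZMod ℓ` has `f a = 1` and `f a' ≠ 0`. Because `a' - a` is `ℓ`-torsion, the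
transvection `x ↦ x + f(x) • (a' - a)` is a well-defined endomorphism of `A` sending `a` to
`a'`, and it is invertible because `1 + f(a' - a) = f a' ≠ 0`.
-/

open Module

theorem Module.exists_dual_eq_one_ne_zero_of_ne_zero_pair {K V : Type*} [Field K]
    [AddCommGroup V] [Module K V] {x y : V} (hx : x ≠ 0) (hy : y ≠ 0) :
    ∃ f : Dual K V, f x = 1 ∧ f y ≠ 0 := by
  obtain ⟨u, hux⟩ := Projective.exists_dual_eq_one K hx
  rcases ne_or_eq (u y) 0 with huy | huy
  · exact ⟨u, hux, huy⟩
  obtain ⟨v, hvy⟩ := Projective.exists_dual_eq_one K hy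
  rcases ne_or_eq (v x) 0 with hvx | hvx
  · exact ⟨(v x)⁻¹ • v, inv_mul_cancel₀ hvx, by simp [hvx, hvy]⟩
  · exact ⟨u + v, by simp [hux, hvx], by simp [huy, hvy]⟩

section

variable {A B : Type*} [AddCommGroup A] [AddCommGroup B]

theorem ModN.mkQ_eq_zero_iff_s6 {n : ℕ} {a : A} : ModN.mkQ n a = 0 ↔ ∃ x : A, n • x = a := by
  simp [ModN.mkQ, Submodule.Quotient.mk_eq_zero]

theorem exists_addMonoidHom_zmod_apply_eq_one_ne_zero {p : ℕ} [Fact p.Prime] {a b : A}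
    (ha : ∀ x : A, p • x ≠ a) (hb : ∀ x : A, p • x ≠ b) :
    ∃ f : A →+ ZMod p, f a = 1 ∧ f b ≠ 0 := by
  obtain ⟨f, hfa, hfb⟩ := exists_dual_eq_one_ne_zero_of_ne_zero_pair (K := ZMod p)
    (mt ModN.mkQ_eq_zero_iff_s6.mp (not_exists.mpr ha))
    (mt ModN.mkQ_eq_zero_iff_s6.mp (not_exists.mpr hb))
  exact ⟨f.toAddMonoidHom.comp (ModN.mkQ p), hfa, hfb⟩

/-- `1 + g ∘ f` is invertible as soon as `1 + f ∘ g` is, with inverse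
`1 - g ∘ (1 + f ∘ g)⁻¹ ∘ f`. -/
def AddEquiv.transvection (f : A →+ B) (g : B →+ A) (e : B ≃+ B)
    (he : ∀ y, e y = y + f (g y)) : A ≃+ A where
  toFun x := x + g (f x)
  invFun x := x - g (e.symm (f x))
  left_inv x := by
    have hf : e.symm (f (x + g (f x))) = f x := by rw [e.symm_apply_eq, he, map_add]
    simp only [hf, add_sub_cancel_right]
  right_inv x := by
    have hf : f (x - g (e.symm (f x))) = e.symm (f x) := by
      rw [map_sub, sub_eq_iff_eq_add, ← he, e.apply_symm_apply]
    simp only [hf, sub_add_cancel]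
  map_add' x y := by simp only [map_add]; abel

@[simp]
theorem AddEquiv.transvection_apply (f : A →+ B) (g : B →+ A) (e : B ≃+ B)
    (he : ∀ y, e y = y + f (g y)) (x : A) : transvection f g e he x = x + g (f x) := rfl

noncomputable def ZMod.liftTorsion (n : ℕ) {v : A} (hv : n • v = 0) : ZMod n →+ A :=
  ZMod.lift n ⟨zmultiplesHom A v, by simpa⟩

@[simp]
theorem ZMod.liftTorsion_intCast (n : ℕ) {v : A} (hv : n • v = 0) (z : ℤ) :
    liftTorsion n hv z = z • v := by
  simp [liftTorsion]

theorem ZMod.liftTorsion_one (n : ℕ) {v : A} (hv : n • v = 0) : liftTorsion n hv 1 = v := by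
  simpa using liftTorsion_intCast n hv 1

theorem AddMonoidHom.map_liftTorsion {n : ℕ} (f : A →+ ZMod n) {v : A} (hv : n • v = 0)
    (k : ZMod n) : f (ZMod.liftTorsion n hv k) = k * f v := by
  obtain ⟨z, rfl⟩ := ZMod.intCast_surjective k
  simp

theorem exists_addEquiv_apply_eq_of_apply_eq_one {p : ℕ} [Fact p.Prime] {a a' : A}
    (ha : p • a = 0) (ha' : p • a' = 0) (f : A →+ ZMod p) (hfa : f a = 1)
    (hfa' : f a' ≠ 0) :
    ∃ ψ : A ≃+ A, ψ a = a' := by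
  have hv : p • (a' - a) = 0 := by rw [smul_sub, ha, ha', sub_zero]
  refine ⟨.transvection f (ZMod.liftTorsion p hv)
    (LinearEquiv.smulOfNeZero (ZMod p) (ZMod p) (f a') hfa').toAddEquiv fun y => ?_, ?_⟩
  · show f a' * y = y + f (ZMod.liftTorsion p hv y)
    rw [f.map_liftTorsion, map_sub, hfa]
    ring
  · rw [AddEquiv.transvection_apply, hfa, ZMod.liftTorsion_one, add_sub_cancel]

end

theorem stmt_6_general {A : Type*} [AddCommGroup A] (ℓ : ℕ) (hℓ : ℓ.Prime)
    (a a' : A) (ha : ℓ • a = 0) (ha' : ℓ • a' = 0)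
    (haB : ¬ (ℓ • a = 0 ∧ ∃ x : A, a = ℓ • x))
    (ha'B : ¬ (ℓ • a' = 0 ∧ ∃ x : A, a' = ℓ • x)) :
    ∃ ψ : A ≃+ A, ψ a = a' := by
  have := Fact.mk hℓ
  obtain ⟨f, hfa, hfa'⟩ := exists_addMonoidHom_zmod_apply_eq_one_ne_zero
    (fun x hx => haB ⟨ha, x, hx.symm⟩) (fun x hx => ha'B ⟨ha', x, hx.symm⟩)
  exact exists_addEquiv_apply_eq_of_apply_eq_one ha ha' f hfa hfa'

/-- for a finite abelian group `A`, a prime `ℓ`, and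
`a, a' ∈ A[ℓ] \ (A[ℓ] ∩ ℓA)`, there is an automorphism `ψ` of `A` with `ψ a = a'`. -/
theorem stmt_6 {A : Type*} [AddCommGroup A] [Fintype A] (ℓ : ℕ) (hℓ : ℓ.Prime)
    (a a' : A) (ha : ℓ • a = 0) (ha' : ℓ • a' = 0)
    (haB : ¬ (ℓ • a = 0 ∧ ∃ x : A, a = ℓ • x))
    (ha'B : ¬ (ℓ • a' = 0 ∧ ∃ x : A, a' = ℓ • x)) :
    ∃ ψ : A ≃+ A, ψ a = a' :=
  stmt_6_general ℓ hℓ a a' ha ha' haB ha'B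
end

section
/- Let A be a finite abelian group and ℓ a prime. Let A[ℓ] = {x ∈ A : ℓ·x = 0} and ℓA = {ℓ·x : x ∈ A}, and for a ∈ A let Adm(a) = {b ∈ A : λ(a,b) = 0 for every alternating ℤ-bilinear map λ : A × A → ℚ/ℤ}. Then for any a, a' ∈ A[ℓ] with a ∉ ℓA and a' ∉ ℓA, the images of Adm(a) and Adm(a') under the quotient map A → A/A[ℓ] have the same cardinality. -/
/-!
For `a ∈ A[ℓ] \ ℓA` one has `Adm(a) = ℤa + ℓA`. The inclusion `⊇` is bilinearity
and `λ(a, ℓv) = λ(ℓa, v) = 0`. For `⊆`, if `b ∉ ℤa + ℓA`, pick characters `χ, ψ : A → ℤ/ℓ`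
with `χ` vanishing on `ℤa + ℓA`, `χ b ≠ 0`, and `ψ a ≠ 0`; then
`λ(x, y) = (χ x ψ y - χ y ψ x) / ℓ` is alternating with `λ(a, b) ≠ 0`.
Since `a ∈ A[ℓ]`, the image of `ℤa + ℓA` in `A/A[ℓ]` is the image of `ℓA`, independent of `a`.
-/

/-- The set `Adm(a)` of `b ∈ A` such that `λ(a,b) = 0` for every alternating
ℤ-bilinear map `λ : A × A → ℚ/ℤ`. -/
def Adm {A : Type*} [AddCommGroup A] (a : A) : Set A :=
  {b | ∀ lam : A → A → AddCircle (1 : ℚ),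
    (∀ x y z : A, lam (x + y) z = lam x z + lam y z) →
    (∀ x y z : A, lam x (y + z) = lam x y + lam x z) →
    (∀ x : A, lam x x = 0) →
    lam a b = 0}

/-- The ℓ-torsion subgroup `A[ℓ] = {x : ℓ • x = 0}` of an abelian group `A`. -/
def torsionSub {A : Type*} [AddCommGroup A] (ℓ : ℕ) : AddSubgroup A where
  carrier := {x | ℓ • x = 0}
  zero_mem' := by simp
  add_mem' := by
    intro x y hx hy
    simp only [Set.mem_setOf_eq, smul_add] at *
    rw [hx, hy, add_zero]
  neg_mem' := by
    intro x hx
    simp only [Set.mem_setOf_eq, smul_neg] at *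
    rw [hx, neg_zero]

/-- `k ↦ k / ℓ`. -/
noncomputable def ZMod.toRatCircle (ℓ : ℕ) [NeZero ℓ] : ZMod ℓ →+ AddCircle (1 : ℚ) :=
  ZMod.lift ℓ ⟨zmultiplesHom _ ((1 / ℓ : ℚ) : AddCircle (1 : ℚ)), by
    have h := addOrderOf_nsmul_eq_zero ((1 / ℓ : ℚ) : AddCircle (1 : ℚ))
    rwa [AddCircle.addOrderOf_period_div (NeZero.pos ℓ), ← natCast_zsmul] at h⟩

lemma ZMod.toRatCircle_injective (ℓ : ℕ) [NeZero ℓ] :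
    Function.Injective (ZMod.toRatCircle ℓ) := by
  refine (injective_iff_map_eq_zero _).2 fun k hk => ?_
  obtain ⟨m, rfl⟩ := ZMod.intCast_surjective k
  rw [ZMod.toRatCircle, ZMod.lift_coe, zmultiplesHom_apply, ← addOrderOf_dvd_iff_zsmul_eq_zero,
    AddCircle.addOrderOf_period_div (NeZero.pos ℓ)] at hk
  exact (ZMod.intCast_zmod_eq_zero_iff_dvd m ℓ).2 hk

section

open AddSubgroup

variable {A : Type*} [AddCommGroup A]

lemma exists_addMonoidHom_zmod_of_notMem {ℓ : ℕ} [Fact ℓ.Prime]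
    {H : AddSubgroup A} (hH : ∀ x : A, ℓ • x ∈ H) {b : A} (hb : b ∉ H) :
    ∃ χ : A →+ ZMod ℓ, (∀ h ∈ H, χ h = 0) ∧ χ b ≠ 0 := by
  let _ := QuotientAddGroup.zmodModule hH
  have hb' : (b : A ⧸ H) ≠ 0 := by rwa [Ne, QuotientAddGroup.eq_zero_iff]
  obtain ⟨φ, hφ⟩ := @Module.Projective.exists_dual_ne_zero _ _ (ZMod ℓ) _ _
    (@Module.Projective.of_free _ _ _ _ _ (Module.Free.of_divisionRing _ _)) _ hb'
  refine ⟨φ.toAddMonoidHom.comp (QuotientAddGroup.mk' H), fun h hh => ?_, hφ⟩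
  rw [AddMonoidHom.comp_apply, QuotientAddGroup.mk'_apply, (QuotientAddGroup.eq_zero_iff h).2 hh]
  exact φ.map_zero

lemma mul_eq_mul_of_mem_Adm {ℓ : ℕ} [NeZero ℓ] {a b : A} (hb : b ∈ Adm a)
    (χ ψ : A →+ ZMod ℓ) : χ a * ψ b = χ b * ψ a := by
  have h := hb (fun x y => ZMod.toRatCircle ℓ (χ x * ψ y - χ y * ψ x))
    (fun x y z => by rw [← map_add]; congr 1; simp only [map_add]; ring)
    (fun x y z => by rw [← map_add]; congr 1; simp only [map_add]; ring)
    (fun x => by simp)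
  exact sub_eq_zero.mp ((map_eq_zero_iff _ (ZMod.toRatCircle_injective ℓ)).mp h)

lemma zsmul_add_nsmul_mem_Adm {ℓ : ℕ} {a : A} (ha : ℓ • a = 0) (n : ℤ) (v : A) :
    n • a + ℓ • v ∈ Adm a := by
  intro lam hl hr halt
  let f : A →+ AddCircle (1 : ℚ) := AddMonoidHom.mk' (lam a) (hr a)
  let g : A →+ AddCircle (1 : ℚ) := AddMonoidHom.mk' (lam · v) (fun x y => hl x y v)
  calc lam a (n • a + ℓ • v) = n • f a + ℓ • f v := by
        show f (n • a + ℓ • v) = _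
        rw [map_add, map_zsmul, map_nsmul]
    _ = n • lam a a + g (ℓ • a) := by rw [map_nsmul]; rfl
    _ = 0 := by rw [halt, ha, map_zero, smul_zero, zero_add]

theorem Adm_eq_zmultiples_sup_range_nsmul {ℓ : ℕ} (hℓ : ℓ.Prime) {a : A} (ha : ℓ • a = 0)
    (haℓA : a ∉ (nsmulAddMonoidHom ℓ : A →+ A).range) :
    Adm a = ((zmultiples a ⊔ (nsmulAddMonoidHom ℓ : A →+ A).range : AddSubgroup A) : Set A) := by
  have := Fact.mk hℓ
  ext b
  constructor
  · intro hb
    by_contra hbH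
    obtain ⟨χ, hχ, hχb⟩ := exists_addMonoidHom_zmod_of_notMem
      (fun x => mem_sup_right (AddMonoidHom.mem_range.mpr ⟨x, rfl⟩)) hbH
    obtain ⟨ψ, -, hψa⟩ := exists_addMonoidHom_zmod_of_notMem
      (fun x => AddMonoidHom.mem_range.mpr ⟨x, rfl⟩) haℓA
    have h := mul_eq_mul_of_mem_Adm hb χ ψ
    rw [hχ a (mem_sup_left (mem_zmultiples a)), zero_mul] at h
    exact mul_ne_zero hχb hψa h.symm
  · intro hb
    obtain ⟨_, hx, _, ⟨v, rfl⟩, rfl⟩ := mem_sup.mp hb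
    obtain ⟨n, rfl⟩ := mem_zmultiples_iff.mp hx
    exact zsmul_add_nsmul_mem_Adm ha n v

lemma image_mk'_Adm_eq_map_range_nsmul {ℓ : ℕ} (hℓ : ℓ.Prime) {a : A} (ha : ℓ • a = 0)
    (haℓA : a ∉ (nsmulAddMonoidHom ℓ : A →+ A).range) :
    QuotientAddGroup.mk' (torsionSub ℓ) '' Adm a
      = (((nsmulAddMonoidHom ℓ : A →+ A).range.map (QuotientAddGroup.mk' (torsionSub ℓ)) :
          AddSubgroup _) : Set _) := by
  have ha0 : QuotientAddGroup.mk' (torsionSub (A := A) ℓ) a = 0 :=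
    (QuotientAddGroup.eq_zero_iff a).mpr ha
  rw [Adm_eq_zmultiples_sup_range_nsmul hℓ ha haℓA, ← coe_map, AddSubgroup.map_sup,
    AddMonoidHom.map_zmultiples, ha0, zmultiples_zero_eq_bot, bot_sup_eq]

end

theorem stmt_8_general {A : Type*} [AddCommGroup A] (ℓ : ℕ) (hℓ : ℓ.Prime)
    (a a' : A) (ha : ℓ • a = 0) (ha' : ℓ • a' = 0)
    (haP : ¬ ∃ x : A, a = ℓ • x) (ha'P : ¬ ∃ x : A, a' = ℓ • x) :
    ((QuotientAddGroup.mk' (torsionSub (A := A) ℓ)) '' Adm a).ncard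
      = ((QuotientAddGroup.mk' (torsionSub (A := A) ℓ)) '' Adm a').ncard := by
  have notMem_range {c : A} (hc : ¬ ∃ x : A, c = ℓ • x) :
      c ∉ (nsmulAddMonoidHom ℓ : A →+ A).range :=
    fun ⟨x, hx⟩ => hc ⟨x, hx.symm⟩
  rw [image_mk'_Adm_eq_map_range_nsmul hℓ ha (notMem_range haP), image_mk'_Adm_eq_map_range_nsmul hℓ ha' (notMem_range ha'P)]

/-- for `a, a' ∈ A[ℓ] \ ℓA`, the images of `Adm(a)` and `Adm(a')`
under the quotient map `A → A/A[ℓ]` have the same cardinality. -/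
theorem stmt_8 {A : Type*} [AddCommGroup A] [Fintype A] (ℓ : ℕ) (hℓ : ℓ.Prime)
    (a a' : A) (ha : ℓ • a = 0) (ha' : ℓ • a' = 0)
    (haP : ¬ ∃ x : A, a = ℓ • x) (ha'P : ¬ ∃ x : A, a' = ℓ • x) :
    ((QuotientAddGroup.mk' (torsionSub (A := A) ℓ)) '' Adm a).ncard
      = ((QuotientAddGroup.mk' (torsionSub (A := A) ℓ)) '' Adm a').ncard :=
  stmt_8_general ℓ hℓ a a' ha ha' haP ha'P
end
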